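/- Let s and t be non-negative integers, and let G1, G2, G3 be graphs. If G2 is an s-perturbation of G1 and G3 is a t-perturbation of G2, then G3 is an (s+t)-perturbation of G1. -/

import Mathlib

/-!
Choose hosts `A` on `V ⊕ Fin s` (for `G₂, G₁`) and `B` on `V ⊕ Fin t` (for `G₃, G₂`), and
replace each by a locally equivalent graph inducing `G₂` on `V`. Gluing them along `V`, with no
edges between the two sets of extra vertices, gives a graph on `V ⊕ Fin (s + t)` in which both
are induced subgraphs. A local complementation of an induced subgraph is the restriction of the
local complementation of the host at the same vertex, so vertex-minors of either piece are
vertex-minors of the glued graph.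
-/

namespace EP

variable {V W : Type}

/-- Local complementation of `G` at `v`: complement the adjacency between
every pair of distinct neighbours of `v`. -/
def localComp (G : SimpleGraph V) (v : V) : SimpleGraph V where
  Adj x y := x ≠ y ∧
    ((G.Adj v x ∧ G.Adj v y ∧ ¬ G.Adj x y) ∨ (¬(G.Adj v x ∧ G.Adj v y) ∧ G.Adj x y))
  symm := ⟨by
    intro x y h
    obtain ⟨hxy, h⟩ := h
    refine ⟨hxy.symm, ?_⟩
    rcases h with ⟨h1, h2, h3⟩ | ⟨h1, h2⟩
    · exact Or.inl ⟨h2, h1, fun h => h3 h.symm⟩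
    · exact Or.inr ⟨fun h => h1 ⟨h.2, h.1⟩, h2.symm⟩⟩
  loopless := ⟨fun x h => h.1 rfl⟩

/-- Two graphs on the same vertex set are locally equivalent if one is obtained from
the other by a sequence of local complementations. -/
def LocEquiv (G G' : SimpleGraph V) : Prop :=
  Relation.ReflTransGen (fun A B => ∃ v, B = localComp A v) G G'

/-- `H` is a vertex-minor of `G`, located at the embedding `f`: some graph locally
equivalent to `G` induces a copy of `H` on the image of `f` (equivalently, `H` is
obtained from `G` by a sequence of local complementations and vertex deletions,
with `f` recording the surviving vertices). -/
def IsVertexMinorAt (G : SimpleGraph V) (H : SimpleGraph W) (f : W ↪ V) : Prop :=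
  ∃ G' : SimpleGraph V, LocEquiv G G' ∧ ∀ x y, H.Adj x y ↔ G'.Adj (f x) (f y)

/-- `G` has a vertex-minor isomorphic to `H`. -/
def HasVertexMinor (G : SimpleGraph V) (H : SimpleGraph W) : Prop :=
  ∃ f : W ↪ V, IsVertexMinorAt G H f

/-- `G₁` is a `t`-perturbation of `G₂`: they have the same vertex set `V`, and some
graph on `|V| + t` vertices contains both of them as vertex-minors (on `V`). -/
def IsPerturbation (t : ℕ) (G₁ G₂ : SimpleGraph V) : Prop :=
  ∃ Gbig : SimpleGraph (V ⊕ Fin t),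
    IsVertexMinorAt Gbig G₁ ⟨Sum.inl, Sum.inl_injective⟩ ∧
    IsVertexMinorAt Gbig G₂ ⟨Sum.inl, Sum.inl_injective⟩

/-- The disjoint union of `k` copies of `H`. -/
def copies (k : ℕ) (H : SimpleGraph W) : SimpleGraph (Fin k × W) where
  Adj x y := x.1 = y.1 ∧ H.Adj x.2 y.2
  symm := ⟨fun _ _ h => ⟨h.1.symm, h.2.symm⟩⟩
  loopless := ⟨fun x h => H.loopless.irrefl x.2 h.2⟩

/-- `G` is a circle graph: its vertices can be assigned chords of a circle
(encoded by pairs of distinct endpoints, all `2|V|` endpoints being distinct) so that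
two distinct vertices are adjacent iff their chords cross, i.e. exactly one endpoint
of one chord lies strictly between the two endpoints of the other. -/
def IsCircleGraph (G : SimpleGraph V) : Prop :=
  ∃ a b : V → ℝ,
    (∀ u v, a u = a v → u = v) ∧ (∀ u v, b u = b v → u = v) ∧ (∀ u v, a u ≠ b v) ∧
    ∀ u v, G.Adj u v ↔ u ≠ v ∧
      ¬((min (a u) (b u) < a v ∧ a v < max (a u) (b u)) ↔
        (min (a u) (b u) < b v ∧ b v < max (a u) (b u)))

/-- `G` is `t`-robust for `H` if every `t`-perturbation of `G` has a vertex-minor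
isomorphic to `H`. -/
def Robust (t : ℕ) (G : SimpleGraph V) (H : SimpleGraph W) : Prop :=
  ∀ G' : SimpleGraph V, IsPerturbation t G' G → HasVertexMinor G' H

open Classical in
/-- The cut-rank of `X` in `G`: the rank over `GF(2)` of the `X × Xᶜ` submatrix of the
adjacency matrix of `G`. -/
noncomputable def cutRank [Fintype V] (G : SimpleGraph V) (X : Set V) : ℕ :=
  (Matrix.of fun (x : X) (y : ↥Xᶜ) => if G.Adj x.1 y.1 then (1 : ZMod 2) else 0).rank

/-- The graph obtained from `G` by deleting all edges with exactly one end in `X`. -/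
def cutDelete (G : SimpleGraph V) (X : Set V) : SimpleGraph V where
  Adj x y := G.Adj x y ∧ (x ∈ X ↔ y ∈ X)
  symm := ⟨fun _ _ h => ⟨h.1.symm, h.2.symm⟩⟩
  loopless := ⟨fun x h => G.loopless.irrefl x h.1⟩

lemma localComp_adj (G : SimpleGraph V) (v x y : V) :
    (localComp G v).Adj x y ↔ x ≠ y ∧
      ((G.Adj v x ∧ G.Adj v y ∧ ¬G.Adj x y) ∨ (¬(G.Adj v x ∧ G.Adj v y) ∧ G.Adj x y)) :=
  Iff.rfl

lemma localComp_adj_self_left (G : SimpleGraph V) (v x : V) :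
    (localComp G v).Adj v x ↔ G.Adj v x :=
  ⟨fun ⟨_, h⟩ => h.elim (fun h => (G.loopless.irrefl v h.1).elim) And.right,
    fun h => ⟨G.ne_of_adj h, Or.inr ⟨fun h' => G.loopless.irrefl v h'.1, h⟩⟩⟩

lemma localComp_localComp (G : SimpleGraph V) (v : V) :
    localComp (localComp G v) v = G := by
  ext x y
  rw [localComp_adj, localComp_adj_self_left, localComp_adj_self_left, localComp_adj]
  by_cases hxy : x = y
  · simp [hxy]
  · by_cases hx : G.Adj v x <;> by_cases hy : G.Adj v y <;> simp [hxy, hx, hy]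

lemma LocEquiv.symm {G G' : SimpleGraph V} (h : LocEquiv G G') : LocEquiv G' G := by
  induction h with
  | refl => exact .refl
  | tail _ hstep ih =>
    obtain ⟨v, rfl⟩ := hstep
    exact .head ⟨v, (localComp_localComp _ v).symm⟩ ih

lemma comap_localComp (f : W ↪ V) (G : SimpleGraph V) (w : W) :
    (localComp G (f w)).comap f = localComp (G.comap f) w := by
  ext x y
  simp only [SimpleGraph.comap_adj]
  exact and_congr f.injective.ne_iff Iff.rfl

lemma LocEquiv.lift_comap {f : W ↪ V} {G : SimpleGraph V} {H : SimpleGraph W}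
    (h : LocEquiv (G.comap f) H) : ∃ G', LocEquiv G G' ∧ G'.comap f = H := by
  induction h with
  | refl => exact ⟨G, .refl, rfl⟩
  | tail _ hstep ih =>
    obtain ⟨G', hG', rfl⟩ := ih
    obtain ⟨w, rfl⟩ := hstep
    exact ⟨localComp G' (f w), hG'.tail ⟨f w, rfl⟩, comap_localComp f G' w⟩

namespace IsVertexMinorAt

variable {U : Type} {G : SimpleGraph V} {H : SimpleGraph W} {f : W ↪ V}

lemma exists_comap_eq (h : IsVertexMinorAt G H f) :
    ∃ G', LocEquiv G G' ∧ G'.comap f = H := by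
  obtain ⟨G', hG', hH⟩ := h
  exact ⟨G', hG', SimpleGraph.ext (funext₂ fun x y => propext (hH x y).symm)⟩

lemma of_locEquiv {G' : SimpleGraph V} (hG : LocEquiv G G') (h : IsVertexMinorAt G' H f) :
    IsVertexMinorAt G H f := by
  obtain ⟨G'', hG', hH⟩ := h
  exact ⟨G'', hG.trans hG', hH⟩

lemma of_comap {C : SimpleGraph U} {g : V ↪ U} (h : IsVertexMinorAt (C.comap g) H f) :
    IsVertexMinorAt C H (f.trans g) := by
  obtain ⟨G', hG', hH⟩ := h
  obtain ⟨C', hC', rfl⟩ := hG'.lift_comap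
  exact ⟨C', hC', hH⟩

end IsVertexMinorAt

section Amalgam

variable {X Y Z : Type} (α : X ↪ Z) (β : Y ↪ Z) (A : SimpleGraph X) (B : SimpleGraph Y)

lemma comap_map_sup_map_left
    (hAB : ∀ a b c d, α a = β c → α b = β d → (A.Adj a b ↔ B.Adj c d)) :
    (A.map α ⊔ B.map β).comap α = A := by
  ext a b
  simp only [SimpleGraph.comap_adj, SimpleGraph.sup_adj, SimpleGraph.map_adj]
  constructor
  · rintro (⟨a', b', h, ha, hb⟩ | ⟨c, d, hcd, hc, hd⟩)
    · rwa [← α.injective ha, ← α.injective hb]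
    · exact (hAB a b c d hc.symm hd.symm).2 hcd
  · exact fun h => Or.inl ⟨a, b, h, rfl, rfl⟩

lemma comap_map_sup_map_right
    (hAB : ∀ a b c d, α a = β c → α b = β d → (A.Adj a b ↔ B.Adj c d)) :
    (A.map α ⊔ B.map β).comap β = B := by
  rw [sup_comm]
  exact comap_map_sup_map_left β α B A fun a b c d hac hbd =>
    (hAB c d a b hac.symm hbd.symm).symm

end Amalgam

lemma sumMap_castAdd_eq_sumMap_natAdd {s t : ℕ} {a : V ⊕ Fin s} {c : V ⊕ Fin t}
    (h : Sum.map id (Fin.castAdd t) a = Sum.map id (Fin.natAdd s) c) :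
    ∃ v, a = .inl v ∧ c = .inl v := by
  rcases a with v | i <;> rcases c with w | j <;>
    simp only [Sum.map_inl, Sum.map_inr, id, Sum.inl.injEq, Sum.inr.injEq, reduceCtorEq,
      Fin.ext_iff, Fin.val_castAdd, Fin.val_natAdd] at h
  · exact ⟨v, rfl, h ▸ rfl⟩
  · omega

theorem perturbation_trans_general {V : Type} (s t : ℕ) (G₁ G₂ G₃ : SimpleGraph V)
    (h₁ : IsPerturbation s G₂ G₁) (h₂ : IsPerturbation t G₃ G₂) :
    IsPerturbation (s + t) G₃ G₁ := by
  obtain ⟨A, hA₂, hA₁⟩ := h₁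
  obtain ⟨B, hB₃, hB₂⟩ := h₂
  obtain ⟨A', hAA', rfl⟩ := hA₂.exists_comap_eq
  obtain ⟨B', hBB', hB'⟩ := hB₂.exists_comap_eq
  let α : V ⊕ Fin s ↪ V ⊕ Fin (s + t) := (Function.Embedding.refl V).sumMap (Fin.castAddEmb t)
  let β : V ⊕ Fin t ↪ V ⊕ Fin (s + t) := (Function.Embedding.refl V).sumMap (Fin.natAddEmb s)
  have agree : ∀ a b c d, α a = β c → α b = β d → (A'.Adj a b ↔ B'.Adj c d) := by
    intro a b c d hac hbd
    obtain ⟨u, rfl, rfl⟩ := sumMap_castAdd_eq_sumMap_natAdd hac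
    obtain ⟨v, rfl, rfl⟩ := sumMap_castAdd_eq_sumMap_natAdd hbd
    exact (iff_of_eq (congrArg (·.Adj u v) hB')).symm
  refine ⟨A'.map α ⊔ B'.map β, ?_, ?_⟩
  · have hG₃ : IsVertexMinorAt B' G₃ _ := hB₃.of_locEquiv hBB'.symm
    rw [← comap_map_sup_map_right α β A' B' agree] at hG₃
    exact hG₃.of_comap
  · have hG₁ : IsVertexMinorAt A' G₁ _ := hA₁.of_locEquiv hAA'.symm
    rw [← comap_map_sup_map_left α β A' B' agree] at hG₁
    exact hG₁.of_comap

/-- Perturbations compose: if `G₂` is an `s`-perturbation of `G₁` and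
`G₃` is a `t`-perturbation of `G₂`, then `G₃` is an `(s+t)`-perturbation of `G₁`. -/
theorem perturbation_trans {V : Type} [Fintype V] (s t : ℕ) (G₁ G₂ G₃ : SimpleGraph V)
    (h₁ : IsPerturbation s G₂ G₁) (h₂ : IsPerturbation t G₃ G₂) :
    IsPerturbation (s + t) G₃ G₁ :=
  perturbation_trans_general s t G₁ G₂ G₃ h₁ h₂

end EP
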